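/- Let H be a connected bialgebra and A = A₋ ⊕ A₊ an algebra split as a direct sum of vector subspaces with projection R: A → A₋. Then every φ ∈ Hom(H,A) with φ(1) = 1 admits a unique Birkhoff decomposition φ = φ₋^{⋆−1} ⋆ φ₊ with φ±(ker ε) ⊆ A±, where on ker ε, φ₋(x) = −R[φ̄(x)] and φ₊(x) = (id − R)[φ̄(x)] for the Bogoliubov map φ̄(x) = φ(x) + Σ φ₋(x′)φ(x″). -/

import Mathlib

/-!
The Bogoliubov recursion is the fixed-point equation `φ₋ = e - R ∘ (φ₋ ⋆ (φ - e))`.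
Since `φ - e` vanishes on `1` and `Δ (F n) ⊆ ∑ F i ⊗ F (n - i)` with `F 0 = K·1`, the value of
`f ⋆ (φ - e)` on `F n` only involves `f` on `F 0, …, F (n-1)`. Such a recursion has exactly one
solution: it is glued from the iterates, which stabilize on each `F n`. On `ker ε` the recursion
reads `φ₋ = -R φ̄`, and `φ₊ := φ₋ ⋆ φ = φ₋ + φ̄ = (id - R) φ̄` there. Conversely, in any Birkhoff
decomposition `φ₊ = φ₋ ⋆ φ`, and applying `R` to `φ₊ = φ₋ + φ̄` on `ker ε` gives back the
recursion. The convolution inverse of `φ₋` comes from the same kind of recursion,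
`ψ = e + ψ ⋆ (e - φ₋)`.
-/

open TensorProduct

variable {K : Type*} [Field K]
variable {H : Type*} [Ring H] [Bialgebra K H]
variable {A : Type*} [Ring A] [Algebra K A]

/-- The convolution product on `Hom(H, A)`. -/
noncomputable def conv (f g : H →ₗ[K] A) : H →ₗ[K] A :=
  (LinearMap.mul' K A) ∘ₗ (TensorProduct.map f g) ∘ₗ (Coalgebra.comul (R := K))

/-- The convolution unit `e = u_A ∘ ε`. -/
noncomputable def convUnit : H →ₗ[K] A :=
  (Algebra.linearMap K A) ∘ₗ (Coalgebra.counit (R := K))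

/-- The image `p ⊗ q` of a pair of submodules inside `H ⊗ H`. -/
noncomputable def tensorSub (p q : Submodule K H) : Submodule K (H ⊗[K] H) :=
  LinearMap.range (TensorProduct.map p.subtype q.subtype)

/-- `(φm, φp)` is a Birkhoff decomposition of `φ` w.r.t. the splitting
`A = Am ⊕ Ap`: both send `1` to `1`, `φm (ker ε) ⊆ Am`, `φp (ker ε) ⊆ Ap`, and
`φ = φm^{⋆-1} ⋆ φp`. -/
noncomputable def IsBirkhoff (Am Ap : Submodule K A)
    (φ φm φp : H →ₗ[K] A) : Prop :=
  φm 1 = 1 ∧ φp 1 = 1 ∧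
  (∀ x : H, Coalgebra.counit (R := K) x = 0 → φm x ∈ Am) ∧
  (∀ x : H, Coalgebra.counit (R := K) x = 0 → φp x ∈ Ap) ∧
  ∃ ψ : H →ₗ[K] A, conv φm ψ = convUnit ∧ conv ψ φm = convUnit ∧ conv ψ φp = φ

/-- The Bogoliubov map `φ̄ x = φ x + m ∘ (φm ⊗ φ) (Δ̃ x)`, with
`Δ̃ x = Δ x - 1 ⊗ x - x ⊗ 1` the reduced coproduct. -/
noncomputable def bogoliubov (φ φm : H →ₗ[K] A) (x : H) : A :=
  φ x + (LinearMap.mul' K A)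
    ((TensorProduct.map φm φ)
      (Coalgebra.comul (R := K) x - (1 : H) ⊗ₜ[K] x - x ⊗ₜ[K] (1 : H)))

section Filtration

variable {k M N P Q : Type*} [Semiring k] [AddCommMonoid M] [Module k M]
  [AddCommMonoid N] [Module k N] [AddCommMonoid P] [Module k P] [AddCommMonoid Q] [Module k Q]

-- For `n = 0` the hypothesis is empty: on `F 0`, `S f` may not depend on `f` at all.
def IsFiltrationContracting (F : ℕ → Submodule k M) (S : (M →ₗ[k] N) → (M →ₗ[k] P)) : Prop :=
  ∀ n (f g : M →ₗ[k] N), (∀ i < n, ∀ y ∈ F i, f y = g y) → ∀ x ∈ F n, S f x = S g x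

theorem LinearMap.exists_eq_on_filtration_of_stable {F : ℕ → Submodule k M}
    (hcover : ∀ x, ∃ n, x ∈ F n)
    (a : ℕ → M →ₗ[k] N) (ha : ∀ n i j, n < i → n < j → ∀ x ∈ F n, a i x = a j x) :
    ∃ L : M →ₗ[k] N, ∀ n, ∀ x ∈ F n, L x = a (n + 1) x := by
  choose deg hdeg using hcover
  have key : ∀ x n i, x ∈ F n → n < i → a (deg x + 1) x = a i x := fun x n i hx hi =>
    (ha _ _ (n + deg x + 1) (by omega) (by omega) x (hdeg x)).trans
      (ha n _ _ (by omega) hi x hx)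
  refine ⟨{ toFun := fun x => a (deg x + 1) x, map_add' := ?_, map_smul' := ?_ },
    fun n x hx => key x n _ hx (by omega)⟩
  · intro x y
    let B := deg x + deg y + deg (x + y) + 1
    simp only [key (x + y) _ B (hdeg _) (by omega), key x _ B (hdeg x) (by omega),
      key y _ B (hdeg y) (by omega), map_add]
  · intro c x
    let B := deg x + deg (c • x) + 1
    simp only [key (c • x) _ B (hdeg _) (by omega), key x _ B (hdeg x) (by omega),
      map_smul, RingHom.id_apply]

namespace IsFiltrationContracting

variable {F : ℕ → Submodule k M}

theorem comp_left {S : (M →ₗ[k] N) → (M →ₗ[k] P)} (hS : IsFiltrationContracting F S)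
    (T : P →ₗ[k] Q) : IsFiltrationContracting F (fun f => T ∘ₗ S f) :=
  fun n f g hfg x hx => congrArg T (hS n f g hfg x hx)

variable {S : (M →ₗ[k] N) → (M →ₗ[k] N)} (hS : IsFiltrationContracting F S)
include hS

theorem eq_of_fixed {c f g : M →ₗ[k] N} (hf : f = c + S f) (hg : g = c + S g) :
    ∀ n, ∀ x ∈ F n, f x = g x := by
  intro n
  induction n using Nat.strong_induction_on with
  | _ n ih =>
    intro x hx
    rw [LinearMap.congr_fun hf x, LinearMap.congr_fun hg x, LinearMap.add_apply,
      LinearMap.add_apply, hS n f g ih x hx]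

theorem iterate_apply_eq (c : M →ₗ[k] N) :
    ∀ n i j, n < i → n < j → ∀ x ∈ F n,
      ((fun f => c + S f)^[i] 0) x = ((fun f => c + S f)^[j] 0) x := by
  intro n
  induction n using Nat.strong_induction_on with
  | _ n ih =>
    intro i j hi hj x hx
    obtain ⟨i, rfl⟩ : ∃ i', i = i' + 1 := ⟨i - 1, by omega⟩
    obtain ⟨j, rfl⟩ : ∃ j', j = j' + 1 := ⟨j - 1, by omega⟩
    rw [Function.iterate_succ_apply', Function.iterate_succ_apply', LinearMap.add_apply,
      LinearMap.add_apply,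
      hS n _ _ (fun m hm y hy => ih m hm i j (by omega) (by omega) y hy) x hx]

theorem existsUnique_fixed (hcover : ∀ x, ∃ n, x ∈ F n) (c : M →ₗ[k] N) :
    ∃! f : M →ₗ[k] N, f = c + S f := by
  obtain ⟨L, hL⟩ := LinearMap.exists_eq_on_filtration_of_stable hcover _ (hS.iterate_apply_eq c)
  have hfix : L = c + S L := by
    ext x
    obtain ⟨n, hx⟩ := hcover x
    have hlow : ∀ i < n, ∀ y ∈ F i, ((fun f => c + S f)^[n] 0) y = L y := fun i hi y hy =>
      (hS.iterate_apply_eq c i n (i + 1) hi (by omega) y hy).trans (hL i y hy).symm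
    rw [hL n x hx, Function.iterate_succ_apply', LinearMap.add_apply, LinearMap.add_apply,
      hS n _ _ hlow x hx]
  refine ⟨L, hfix, fun g hg => LinearMap.ext fun x => ?_⟩
  obtain ⟨n, hx⟩ := hcover x
  exact hS.eq_of_fixed hg hfix n x hx

end IsFiltrationContracting

end Filtration

theorem Submodule.apply_mem_and_sub_apply_mem_of_codisjoint {k M : Type*} [Ring k]
    [AddCommGroup M] [Module k M] {p q : Submodule k M} (hpq : Codisjoint p q)
    {R : M →ₗ[k] M} (h₁ : ∀ a ∈ p, R a = a) (h₂ : ∀ a ∈ q, R a = 0) (a : M) :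
    R a ∈ p ∧ a - R a ∈ q := by
  obtain ⟨y, z, hy, hz, rfl⟩ := Submodule.codisjoint_iff_exists_add_eq.mp hpq a
  rw [map_add, h₁ y hy, h₂ z hz, add_zero, add_sub_cancel_left]
  exact ⟨hy, hz⟩

section Convolution

open WithConv

theorem toConv_conv (f g : H →ₗ[K] A) : toConv (conv f g) = toConv f * toConv g := rfl

theorem toConv_convUnit : toConv (convUnit : H →ₗ[K] A) = 1 := rfl

theorem convUnit_apply (x : H) :
    (convUnit : H →ₗ[K] A) x = algebraMap K A (Coalgebra.counit (R := K) x) := rfl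

theorem convUnit_apply_one : (convUnit : H →ₗ[K] A) 1 = 1 := by
  rw [convUnit_apply, Bialgebra.counit_one, map_one]

theorem conv_apply_one (f g : H →ₗ[K] A) : conv f g 1 = f 1 * g 1 := by
  rw [conv, LinearMap.comp_apply, LinearMap.comp_apply, Bialgebra.comul_one,
    Algebra.TensorProduct.one_def, map_tmul, LinearMap.mul'_apply]

theorem conv_sub_convUnit (f g : H →ₗ[K] A) : conv f (g - convUnit) = conv f g - f :=
  toConv_injective <| by simp only [toConv_conv, toConv_sub, toConv_convUnit, mul_sub, mul_one]

theorem bogoliubov_eq_conv_sub {φ f : H →ₗ[K] A} (hφ : φ 1 = 1) (hf : f 1 = 1) (x : H) :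
    bogoliubov φ f x = conv f (φ - convUnit) x := by
  rw [conv_sub_convUnit, LinearMap.sub_apply, bogoliubov, map_sub, map_sub, map_sub, map_sub,
    map_tmul, map_tmul, LinearMap.mul'_apply, LinearMap.mul'_apply, hφ, hf, one_mul, mul_one]
  change _ + (conv f φ x - _ - _) = _
  abel

theorem ext_of_one_of_ker_counit {V : Type*} [AddCommGroup V] [Module K V] {f g : H →ₗ[K] V}
    (h1 : f 1 = g 1) (hker : ∀ x, Coalgebra.counit (R := K) x = 0 → f x = g x) : f = g := by
  ext x
  set c := Coalgebra.counit (R := K) x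
  have hx : Coalgebra.counit (R := K) (x - c • 1) = 0 := by
    rw [map_sub, map_smul, Bialgebra.counit_one, smul_eq_mul, mul_one, sub_self]
  calc f x = f (x - c • 1) + c • f 1 := by rw [map_sub, map_smul, sub_add_cancel]
    _ = g (x - c • 1) + c • g 1 := by rw [hker _ hx, h1]
    _ = g x := by rw [map_sub, map_smul, sub_add_cancel]

theorem tensorSub_le_eqLocus {V W : Type*} [AddCommGroup V] [Module K V] [AddCommGroup W]
    [Module K W] {p q : Submodule K H} {f₁ f₂ : H →ₗ[K] V} {g₁ g₂ : H →ₗ[K] W}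
    (hf : ∀ y ∈ p, f₁ y = f₂ y) (hg : ∀ z ∈ q, g₁ z = g₂ z) :
    tensorSub p q ≤ LinearMap.eqLocus (map f₁ g₁) (map f₂ g₂) := by
  rintro _ ⟨t, rfl⟩
  have ef : f₁ ∘ₗ p.subtype = f₂ ∘ₗ p.subtype := LinearMap.ext fun y => hf y y.2
  have eg : g₁ ∘ₗ q.subtype = g₂ ∘ₗ q.subtype := LinearMap.ext fun z => hg z z.2
  rw [LinearMap.mem_eqLocus, ← LinearMap.comp_apply, ← LinearMap.comp_apply, ← map_comp,
    ← map_comp, ef, eg]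

end Convolution

section Birkhoff

variable {Am Ap : Submodule K A} {R : A →ₗ[K] A} {φ φm φp : H →ₗ[K] A}

theorem conv_apply_eq_add_bogoliubov (hφ : φ 1 = 1) (hm : φm 1 = 1) (x : H) :
    conv φm φ x = φm x + bogoliubov φ φm x := by
  rw [bogoliubov_eq_conv_sub hφ hm, conv_sub_convUnit, LinearMap.sub_apply, add_sub_cancel]

/-- Birkhoff's recursion is `φm = convUnit + bogoliubovStep R φ φm`. -/
noncomputable def bogoliubovStep (R : A →ₗ[K] A) (φ f : H →ₗ[K] A) : H →ₗ[K] A :=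
  (-R) ∘ₗ conv f (φ - convUnit)

theorem bogoliubovStep_apply_one (hφ : φ 1 = 1) (f : H →ₗ[K] A) :
    bogoliubovStep R φ f 1 = 0 := by
  rw [bogoliubovStep, LinearMap.comp_apply, conv_apply_one, LinearMap.sub_apply, hφ,
    convUnit_apply_one, sub_self, mul_zero, map_zero]

theorem bogoliubovStep_apply (hφ : φ 1 = 1) (hm : φm 1 = 1) (x : H) :
    bogoliubovStep R φ φm x = -R (bogoliubov φ φm x) := by
  rw [bogoliubovStep, LinearMap.comp_apply, LinearMap.neg_apply, bogoliubov_eq_conv_sub hφ hm]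

theorem convUnit_add_bogoliubovStep_apply (hφ : φ 1 = 1) (hm : φm 1 = 1) {x : H}
    (hx : Coalgebra.counit (R := K) x = 0) :
    (convUnit + bogoliubovStep R φ φm : H →ₗ[K] A) x = -R (bogoliubov φ φm x) := by
  rw [LinearMap.add_apply, convUnit_apply, hx, map_zero, zero_add, bogoliubovStep_apply hφ hm]

theorem IsBirkhoff.eq_conv (h : IsBirkhoff Am Ap φ φm φp) : φp = conv φm φ := by
  obtain ⟨-, -, -, -, ψ, hmψ, -, hψp⟩ := h
  apply WithConv.toConv_injective
  rw [toConv_conv, ← hψp, toConv_conv, ← mul_assoc, ← toConv_conv φm, hmψ, toConv_convUnit,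
    one_mul]

theorem IsBirkhoff.apply_eq (hR₁ : ∀ a ∈ Am, R a = a) (hR₂ : ∀ a ∈ Ap, R a = 0)
    (hφ : φ 1 = 1) (h : IsBirkhoff Am Ap φ φm φp) {x : H}
    (hx : Coalgebra.counit (R := K) x = 0) :
    φm x = -R (bogoliubov φ φm x) ∧ φp x = bogoliubov φ φm x - R (bogoliubov φ φm x) := by
  have hsum : φp x = φm x + bogoliubov φ φm x := by
    rw [h.eq_conv, conv_apply_eq_add_bogoliubov hφ h.1]
  have hneg : φm x = -R (bogoliubov φ φm x) := by
    have hR := congrArg R hsum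
    rw [map_add, hR₂ _ (h.2.2.2.1 x hx), hR₁ _ (h.2.2.1 x hx)] at hR
    exact eq_neg_of_add_eq_zero_left hR.symm
  exact ⟨hneg, by rw [hsum, hneg, neg_add_eq_sub]⟩

theorem IsBirkhoff.eq_convUnit_add_bogoliubovStep (hR₁ : ∀ a ∈ Am, R a = a)
    (hR₂ : ∀ a ∈ Ap, R a = 0) (hφ : φ 1 = 1) (h : IsBirkhoff Am Ap φ φm φp) :
    φm = convUnit + bogoliubovStep R φ φm := by
  refine ext_of_one_of_ker_counit ?_ fun x hx => ?_
  · rw [LinearMap.add_apply, bogoliubovStep_apply_one hφ, add_zero, h.1, convUnit_apply_one]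
  · rw [convUnit_add_bogoliubovStep_apply hφ h.1 hx, (h.apply_eq hR₁ hR₂ hφ hx).1]

end Birkhoff

section ConnectedFiltration

open WithConv

variable {F : ℕ → Submodule K H} (hcover : ∀ x : H, ∃ n, x ∈ F n)
  (hcomul : ∀ n, ∀ x ∈ F n, Coalgebra.comul (R := K) x ∈
    ∑ i ∈ Finset.range (n + 1), tensorSub (F i) (F (n - i)))
  (hconn : F 0 = Submodule.span K {(1 : H)})
  {Am Ap : Submodule K A} {R : A →ₗ[K] A} {φ φm : H →ₗ[K] A}

include hcomul hconn in
theorem isFiltrationContracting_conv_right {g : H →ₗ[K] A} (hg : g 1 = 0) :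
    IsFiltrationContracting F (fun f => conv f g) := by
  intro n f₁ f₂ hf x hx
  have hg0 : ∀ z ∈ F (n - n), g z = (0 : H →ₗ[K] A) z := by
    intro z hz
    rw [Nat.sub_self, hconn] at hz
    obtain ⟨c, rfl⟩ := Submodule.mem_span_singleton.mp hz
    rw [map_smul, hg, smul_zero, LinearMap.zero_apply]
  have hle : ∑ i ∈ Finset.range (n + 1), tensorSub (F i) (F (n - i)) ≤
      LinearMap.eqLocus (map f₁ g) (map f₂ g) := by
    refine Finset.sum_induction _ (· ≤ _) (fun _ _ => sup_le) bot_le fun i hi => ?_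
    rcases (Finset.mem_range_succ_iff.mp hi).lt_or_eq with hi | rfl
    · exact tensorSub_le_eqLocus (hf i hi) fun _ _ => rfl
    · -- both sides vanish, since `g` kills `F 0 = K·1`
      intro w hw
      rw [LinearMap.mem_eqLocus,
        LinearMap.mem_eqLocus.mp (tensorSub_le_eqLocus (fun _ _ => rfl) hg0 hw),
        LinearMap.mem_eqLocus.mp (tensorSub_le_eqLocus (f₁ := f₂) (fun _ _ => rfl) hg0 hw),
        map_zero_right, map_zero_right]
  exact congrArg (LinearMap.mul' K A) (LinearMap.mem_eqLocus.mp (hle (hcomul n x hx)))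

include hcomul hconn in
theorem isFiltrationContracting_bogoliubovStep (hφ : φ 1 = 1) :
    IsFiltrationContracting F (bogoliubovStep R φ) :=
  (isFiltrationContracting_conv_right hcomul hconn
    (by rw [LinearMap.sub_apply, hφ, convUnit_apply_one, sub_self])).comp_left (-R)

include hcover hcomul hconn in
theorem exists_conv_eq_convUnit {f : H →ₗ[K] A} (hf : f 1 = 1) :
    ∃ ψ : H →ₗ[K] A, ψ 1 = 1 ∧ conv ψ f = convUnit := by
  have hS := isFiltrationContracting_conv_right hcomul hconn (g := convUnit - f)
    (by rw [LinearMap.sub_apply, hf, convUnit_apply_one, sub_self])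
  obtain ⟨ψ, hψ, -⟩ := hS.existsUnique_fixed hcover convUnit
  refine ⟨ψ, ?_, toConv_injective ?_⟩
  · rw [hψ, LinearMap.add_apply, conv_apply_one, LinearMap.sub_apply, hf, convUnit_apply_one,
      sub_self, mul_zero, add_zero]
  · have h : toConv ψ = 1 + toConv ψ * (1 - toConv f) := congrArg toConv hψ
    rw [toConv_conv, toConv_convUnit, ← sub_eq_iff_eq_add.mpr h]
    noncomm_ring

include hcover hcomul hconn in
theorem exists_conv_inverse {f : H →ₗ[K] A} (hf : f 1 = 1) :
    ∃ ψ : H →ₗ[K] A, conv f ψ = convUnit ∧ conv ψ f = convUnit := by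
  obtain ⟨ψ, hψ1, hψ⟩ := exists_conv_eq_convUnit hcover hcomul hconn hf
  obtain ⟨χ, -, hχ⟩ := exists_conv_eq_convUnit hcover hcomul hconn hψ1
  have hχf : χ = f := congrArg ofConv (left_inv_eq_right_inv (a := toConv ψ) (b := toConv χ)
    (c := toConv f) (congrArg toConv hχ) (congrArg toConv hψ))
  exact ⟨ψ, hχf ▸ hχ, hψ⟩

include hcover hcomul hconn in
theorem isBirkhoff_of_eq_convUnit_add_bogoliubovStep (hAc : IsCompl Am Ap)
    (hR₁ : ∀ a ∈ Am, R a = a) (hR₂ : ∀ a ∈ Ap, R a = 0) (hφ : φ 1 = 1)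
    (hfix : φm = convUnit + bogoliubovStep R φ φm) :
    IsBirkhoff Am Ap φ φm (conv φm φ) := by
  have hm1 : φm 1 = 1 := by
    rw [hfix, LinearMap.add_apply, bogoliubovStep_apply_one hφ, add_zero, convUnit_apply_one]
  have hm : ∀ x, Coalgebra.counit (R := K) x = 0 → φm x = -R (bogoliubov φ φm x) :=
    fun x hx => (LinearMap.congr_fun hfix x).trans (convUnit_add_bogoliubovStep_apply hφ hm1 hx)
  have hproj := Submodule.apply_mem_and_sub_apply_mem_of_codisjoint hAc.codisjoint hR₁ hR₂
  obtain ⟨ψ, hmψ, hψm⟩ := exists_conv_inverse hcover hcomul hconn hm1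
  refine ⟨hm1, by rw [conv_apply_one, hm1, hφ, one_mul], fun x hx => ?_, fun x hx => ?_,
    ψ, hmψ, hψm, toConv_injective ?_⟩
  · rw [hm x hx]
    exact Am.neg_mem (hproj _).1
  · rw [conv_apply_eq_add_bogoliubov hφ hm1, hm x hx, neg_add_eq_sub]
    exact (hproj _).2
  · rw [toConv_conv, toConv_conv, ← mul_assoc, ← toConv_conv ψ, hψm, toConv_convUnit, one_mul]

end ConnectedFiltration

theorem birkhoff_decomposition_general
    (F : ℕ → Submodule K H)
    (hcover : ∀ x : H, ∃ n, x ∈ F n)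
    (hcomul : ∀ n, ∀ x ∈ F n,
      Coalgebra.comul (R := K) x ∈
        ∑ i ∈ Finset.range (n + 1), tensorSub (F i) (F (n - i)))
    (hconn : F 0 = Submodule.span K {(1 : H)})
    (Am Ap : Submodule K A) (hAc : IsCompl Am Ap)
    (R : A →ₗ[K] A) (hR₁ : ∀ a ∈ Am, R a = a) (hR₂ : ∀ a ∈ Ap, R a = 0)
    (φ : H →ₗ[K] A) (hφ : φ 1 = 1) :
    (∃! p : (H →ₗ[K] A) × (H →ₗ[K] A), IsBirkhoff Am Ap φ p.1 p.2) ∧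
    (∀ φm φp : H →ₗ[K] A, IsBirkhoff Am Ap φ φm φp →
      ∀ x : H, Coalgebra.counit (R := K) x = 0 →
        φm x = -R (bogoliubov φ φm x) ∧
        φp x = bogoliubov φ φm x - R (bogoliubov φ φm x)) := by
  obtain ⟨φm, hfix, huniq⟩ :=
    (isFiltrationContracting_bogoliubovStep hcomul hconn (R := R) hφ).existsUnique_fixed hcover
      convUnit
  refine ⟨⟨(φm, conv φm φ), isBirkhoff_of_eq_convUnit_add_bogoliubovStep hcover hcomul hconn
      hAc hR₁ hR₂ hφ hfix, ?_⟩, fun _ _ h _ hx => h.apply_eq hR₁ hR₂ hφ hx⟩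
  rintro ⟨φm', φp'⟩ h
  have hm : φm' = φm := huniq φm' (h.eq_convUnit_add_bogoliubovStep hR₁ hR₂ hφ)
  exact Prod.ext hm (h.eq_conv.trans (congrArg (conv · φ) hm))

/-- in a connected bialgebra `H`, every `φ` with `φ 1 = 1` admits a
unique Birkhoff decomposition w.r.t. a vector-space splitting `A = Am ⊕ Ap` with
projection `R` onto `Am`; on `ker ε` it is given by `φm x = -R (φ̄ x)` and
`φp x = (id - R) (φ̄ x)`. -/
theorem birkhoff_decomposition
    (F : ℕ → Submodule K H)
    (hmono : Monotone F)
    (hcover : ∀ x : H, ∃ n, x ∈ F n)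
    (hcomul : ∀ n, ∀ x ∈ F n,
      Coalgebra.comul (R := K) x ∈
        ∑ i ∈ Finset.range (n + 1), tensorSub (F i) (F (n - i)))
    (hconn : F 0 = Submodule.span K {(1 : H)})
    (Am Ap : Submodule K A) (hAc : IsCompl Am Ap)
    (R : A →ₗ[K] A) (hR₁ : ∀ a ∈ Am, R a = a) (hR₂ : ∀ a ∈ Ap, R a = 0)
    (φ : H →ₗ[K] A) (hφ : φ 1 = 1) :
    (∃! p : (H →ₗ[K] A) × (H →ₗ[K] A), IsBirkhoff Am Ap φ p.1 p.2) ∧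
    (∀ φm φp : H →ₗ[K] A, IsBirkhoff Am Ap φ φm φp →
      ∀ x : H, Coalgebra.counit (R := K) x = 0 →
        φm x = -R (bogoliubov φ φm x) ∧
        φp x = bogoliubov φ φm x - R (bogoliubov φ φm x)) :=
  birkhoff_decomposition_general F hcover hcomul hconn Am Ap hAc R hR₁ hR₂ φ hφ
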